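/- arXiv:1208.2200 — 6 statements merged into one kernel-verified Lean document; each statement's English description precedes it below -/
import Mathlib

section
/- Let X be a zero-mean real random variable with |X| ≤ a almost surely, for some a > 0, and let λ > 0. Then E[e^{λX} - 1 - λX] ≤ ((e^{λa} - 1 - λa)/a²) · E[X²]. -/
/-!
The bound holds pointwise before integrating: comparing the power series
`e^u - 1 - u = ∑ u^(n+2)/(n+2)!` and `e^v - 1 - v = ∑ v^(n+2)/(n+2)!` term by term, with
`u^(n+2) ≤ u^2 |u|^n ≤ (u/v)^2 v^(n+2)` for `|u| ≤ v`, gives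
`e^u - 1 - u ≤ (e^v - 1 - v)/v^2 · u^2`. Apply this with `u = λX`, `v = λa` and integrate.
-/

open MeasureTheory

namespace Real

lemma hasSum_exp_sub_one_sub (u : ℝ) :
    HasSum (fun n : ℕ => u ^ (n + 2) / (n + 2).factorial) (exp u - 1 - u) := by
  have h := exp_eq_exp_ℝ ▸ NormedSpace.expSeries_div_hasSum_exp u
  simpa [Finset.sum_range_succ, sub_sub] using
    (hasSum_nat_add_iff' (f := fun n : ℕ => u ^ n / n.factorial) 2).2 h

lemma exp_sub_one_sub_le_of_abs_le {u v : ℝ} (hv : 0 < v) (h : |u| ≤ v) :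
    exp u - 1 - u ≤ (exp v - 1 - v) / v ^ 2 * u ^ 2 := by
  have hterm (n : ℕ) : u ^ (n + 2) / (n + 2).factorial ≤
      u ^ 2 / v ^ 2 * (v ^ (n + 2) / (n + 2).factorial) := by
    have hpow : u ^ (n + 2) ≤ u ^ 2 / v ^ 2 * v ^ (n + 2) :=
      calc u ^ (n + 2) ≤ |u| ^ (n + 2) := by rw [← abs_pow]; exact le_abs_self _
        _ = u ^ 2 * |u| ^ n := by rw [pow_add, sq_abs, mul_comm]
        _ ≤ u ^ 2 * v ^ n := by gcongr
        _ = u ^ 2 / v ^ 2 * v ^ (n + 2) := by field_simp; ring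
    rw [← mul_div_assoc]
    gcongr
  calc exp u - 1 - u ≤ u ^ 2 / v ^ 2 * (exp v - 1 - v) :=
        hasSum_le hterm (hasSum_exp_sub_one_sub u) ((hasSum_exp_sub_one_sub v).mul_left _)
    _ = (exp v - 1 - v) / v ^ 2 * u ^ 2 := by ring

lemma exp_mul_sub_one_sub_le {l a x : ℝ} (hl : 0 < l) (ha : 0 < a) (hx : |x| ≤ a) :
    exp (l * x) - 1 - l * x ≤ (exp (l * a) - 1 - l * a) / a ^ 2 * x ^ 2 := by
  have hlx : |l * x| ≤ l * a := by
    rw [abs_mul, abs_of_pos hl]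
    exact mul_le_mul_of_nonneg_left hx hl.le
  calc exp (l * x) - 1 - l * x
      ≤ (exp (l * a) - 1 - l * a) / (l * a) ^ 2 * (l * x) ^ 2 :=
        exp_sub_one_sub_le_of_abs_le (by positivity) hlx
    _ = (exp (l * a) - 1 - l * a) / a ^ 2 * x ^ 2 := by field_simp

end Real

theorem stmt_4_general {Ω : Type*} [MeasurableSpace Ω] {μ : Measure Ω} [IsProbabilityMeasure μ]
    (X : Ω → ℝ) (hX : Integrable X μ)
    (a : ℝ) (ha : 0 < a) (hbound : ∀ᵐ ω ∂μ, |X ω| ≤ a)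
    (l : ℝ) (hl : 0 < l) :
    ∫ ω, (Real.exp (l * X ω) - 1 - l * X ω) ∂μ ≤
      ((Real.exp (l * a) - 1 - l * a) / a ^ 2) * ∫ ω, (X ω) ^ 2 ∂μ := by
  have hX2 : Integrable (fun ω => X ω ^ 2) μ :=
    (memLp_of_bounded (hbound.mono fun _ => abs_le.1) hX.aestronglyMeasurable 2).integrable_sq
  calc ∫ ω, (Real.exp (l * X ω) - 1 - l * X ω) ∂μ
      ≤ ∫ ω, (Real.exp (l * a) - 1 - l * a) / a ^ 2 * X ω ^ 2 ∂μ := by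
        refine integral_mono_of_nonneg (ae_of_all _ fun ω => ?_) (hX2.const_mul _) ?_
        · simp only [Pi.zero_apply]
          linarith [Real.add_one_le_exp (l * X ω)]
        · filter_upwards [hbound] with ω hω using Real.exp_mul_sub_one_sub_le hl ha hω
    _ = (Real.exp (l * a) - 1 - l * a) / a ^ 2 * ∫ ω, X ω ^ 2 ∂μ := integral_const_mul _ _

theorem stmt_4 {Ω : Type*} [MeasurableSpace Ω] {μ : Measure Ω} [IsProbabilityMeasure μ]
    (X : Ω → ℝ) (hX : Integrable X μ) (hmean : ∫ ω, X ω ∂μ = 0)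
    (a : ℝ) (ha : 0 < a) (hbound : ∀ᵐ ω ∂μ, |X ω| ≤ a)
    (l : ℝ) (hl : 0 < l) :
    ∫ ω, (Real.exp (l * X ω) - 1 - l * X ω) ∂μ ≤
      ((Real.exp (l * a) - 1 - l * a) / a ^ 2) * ∫ ω, (X ω) ^ 2 ∂μ :=
  stmt_4_general X hX a ha hbound l hl
end

section
/- For all r > 0, a > 0, b > 0, exp(r/a - (r/a + b²/a²)·log(1 + ra/b²)) ≤ (e·b²/(ra))^{r/a}. -/
open Real

theorem exp_sub_mul_log_one_add_le_rpow {t c u : ℝ} (ht : 0 ≤ t) (hc : 0 ≤ c) (hu : 0 < u) :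
    exp (t - (t + c) * log (1 + u)) ≤ (exp 1 / u) ^ t := by
  have hlog_le : log u ≤ log (1 + u) := log_le_log hu (by linarith)
  have hlog_nonneg : 0 ≤ log (1 + u) := log_nonneg (by linarith)
  rw [rpow_def_of_pos (by positivity), log_div (exp_ne_zero 1) hu.ne', log_exp, exp_le_exp]
  calc t - (t + c) * log (1 + u) ≤ t - t * log (1 + u) := by nlinarith
    _ ≤ t - t * log u := by nlinarith
    _ = (1 - log u) * t := by ring

theorem stmt_11 (r a b : ℝ) (hr : 0 < r) (ha : 0 < a) (hb : 0 < b) :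
    Real.exp (r / a - (r / a + b ^ 2 / a ^ 2) * Real.log (1 + r * a / b ^ 2)) ≤
      (Real.exp 1 * b ^ 2 / (r * a)) ^ (r / a) := by
  have hbase : exp 1 * b ^ 2 / (r * a) = exp 1 / (r * a / b ^ 2) := by field_simp
  rw [hbase]
  exact exp_sub_mul_log_one_add_le_rpow (by positivity) (by positivity) (by positivity)
end

section
/- Let u : ℝ → ℝ be twice differentiable with |u'(t)| ≤ c and (u²)''(t) ≤ 2D²c² for all t, where c > 0 and D ≥ 1, and suppose u ≥ 0. Then for all t, (cosh ∘ u)''(t) ≤ D²c²·cosh(u(t)). -/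
/-!
Write `(cosh ∘ u)'' = cosh u · u'² + sinh u · u''` and `(u²)'' / 2 = u'² + u · u''`.
Where `u'' ≥ 0`, the inequality `sinh u ≤ u cosh u` (valid for `u ≥ 0`) bounds the first
expression by `cosh u · (u²)'' / 2`; where `u'' < 0`, the term `sinh u · u''` is nonpositive
and the bound `u'² ≤ c²` suffices.
-/

open Real Set

lemma Real.sinh_le_mul_cosh {x : ℝ} (hx : 0 ≤ x) : sinh x ≤ x * cosh x := by
  have hderiv : ∀ z, HasDerivAt (fun z => z * cosh z - sinh z) (z * sinh z) z := fun z => by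
    have h : HasDerivAt (fun z => z * cosh z - sinh z) (1 * cosh z + z * sinh z - cosh z) z :=
      ((hasDerivAt_id z).mul (hasDerivAt_cosh z)).sub (hasDerivAt_sinh z)
    exact h.congr_deriv (by ring)
  have hmono : MonotoneOn (fun z => z * cosh z - sinh z) (Ici 0) := by
    refine monotoneOn_of_deriv_nonneg (convex_Ici 0) (by fun_prop)
      (fun z _ => (hderiv z).differentiableAt.differentiableWithinAt) fun z hz => ?_
    rw [interior_Ici] at hz
    rw [(hderiv z).deriv]
    exact mul_nonneg hz.le (sinh_nonneg_iff.2 hz.le)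
  simpa using hmono self_mem_Ici hx hx

lemma Real.cosh_mul_sq_add_sinh_mul_le {x a b M : ℝ} (hx : 0 ≤ x) (h₁ : a ^ 2 + x * b ≤ M)
    (h₂ : a ^ 2 ≤ M) : cosh x * a ^ 2 + sinh x * b ≤ M * cosh x := by
  have hcosh : 0 ≤ cosh x := (cosh_pos x).le
  rcases le_or_gt 0 b with hb | hb
  · calc cosh x * a ^ 2 + sinh x * b ≤ cosh x * a ^ 2 + x * cosh x * b := by
          gcongr; exact sinh_le_mul_cosh hx
      _ = (a ^ 2 + x * b) * cosh x := by ring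
      _ ≤ M * cosh x := by gcongr
  · calc cosh x * a ^ 2 + sinh x * b ≤ a ^ 2 * cosh x := by
          nlinarith [mul_nonpos_of_nonneg_of_nonpos (sinh_nonneg_iff.2 hx) hb.le]
      _ ≤ M * cosh x := by gcongr

section SecondDerivative

variable {u : ℝ → ℝ} {t : ℝ}

lemma deriv_deriv_cosh_comp (hu : Differentiable ℝ u) (hu' : DifferentiableAt ℝ (deriv u) t) :
    deriv (deriv fun s => cosh (u s)) t =
      cosh (u t) * deriv u t ^ 2 + sinh (u t) * deriv (deriv u) t := by
  have hfirst : deriv (fun s => cosh (u s)) = fun s => sinh (u s) * deriv u s := funext fun s =>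
    ((hasDerivAt_cosh (u s)).comp s (hu s).hasDerivAt).deriv
  have hsecond : HasDerivAt (fun s => sinh (u s) * deriv u s)
      (cosh (u t) * deriv u t * deriv u t + sinh (u t) * deriv (deriv u) t) t :=
    ((hasDerivAt_sinh (u t)).comp t (hu t).hasDerivAt).mul hu'.hasDerivAt
  rw [hfirst, hsecond.deriv]
  ring

lemma deriv_deriv_sq (hu : Differentiable ℝ u) (hu' : DifferentiableAt ℝ (deriv u) t) :
    deriv (deriv fun s => u s ^ 2) t = 2 * deriv u t ^ 2 + 2 * u t * deriv (deriv u) t := by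
  have hfirst : deriv (fun s => u s ^ 2) = fun s => 2 * u s * deriv u s := funext fun s => by
    have h : HasDerivAt (fun s => u s ^ 2) (2 * u s ^ 1 * deriv u s) s := (hu s).hasDerivAt.pow 2
    simpa using h.deriv
  have hsecond : HasDerivAt (fun s => 2 * u s * deriv u s)
      (2 * deriv u t * deriv u t + 2 * u t * deriv (deriv u) t) t :=
    ((hu t).hasDerivAt.const_mul 2).mul hu'.hasDerivAt
  rw [hfirst, hsecond.deriv]
  ring

end SecondDerivative

theorem stmt_12_general (u : ℝ → ℝ) (c D : ℝ) (hD : 1 ≤ D)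
    (hu : Differentiable ℝ u) (hu2 : Differentiable ℝ (deriv u))
    (hpos : ∀ t, 0 ≤ u t)
    (hu' : ∀ t, |deriv u t| ≤ c)
    (husq : ∀ t, deriv (deriv (fun s => (u s) ^ 2)) t ≤ 2 * D ^ 2 * c ^ 2) :
    ∀ t, deriv (deriv (fun s => Real.cosh (u s))) t ≤ D ^ 2 * c ^ 2 * Real.cosh (u t) := by
  intro t
  have hsq := husq t
  rw [deriv_deriv_sq hu (hu2 t)] at hsq
  rw [deriv_deriv_cosh_comp hu (hu2 t)]
  refine cosh_mul_sq_add_sinh_mul_le (hpos t) (by linarith) ?_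
  calc deriv u t ^ 2 = |deriv u t| ^ 2 := (sq_abs _).symm
    _ ≤ c ^ 2 := pow_le_pow_left₀ (abs_nonneg _) (hu' t) 2
    _ ≤ D ^ 2 * c ^ 2 := le_mul_of_one_le_left (sq_nonneg c) (one_le_pow₀ hD)

theorem stmt_12 (u : ℝ → ℝ) (c D : ℝ) (hc : 0 < c) (hD : 1 ≤ D)
    (hu : Differentiable ℝ u) (hu2 : Differentiable ℝ (deriv u))
    (hpos : ∀ t, 0 ≤ u t)
    (hu' : ∀ t, |deriv u t| ≤ c)
    (husq : ∀ t, deriv (deriv (fun s => (u s) ^ 2)) t ≤ 2 * D ^ 2 * c ^ 2) :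
    ∀ t, deriv (deriv (fun s => Real.cosh (u s))) t ≤ D ^ 2 * c ^ 2 * Real.cosh (u t) :=
  stmt_12_general u c D hD hu hu2 hpos hu' husq
end

section
/- Let μ be a measure on a measurable space T, p ≥ 2, and x, v ∈ L^p(μ) real-valued with x ≠ 0. Then (p-1)·‖x‖^{2-p}·∫ |x|^{p-2} v² dμ - (p-2)·‖x‖^{2-2p}·(∫ |x|^{p-2} x v dμ)² ≤ (p-1)·‖v‖², where ‖·‖ is the L^p norm. -/
/-!
Hölder's inequality with the exponents `p / (p - 2)` and `p / 2` bounds `∫ |x|^(p-2) v²` by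
`‖x‖^(p-2) ‖v‖²`, which gives the claim after multiplying by `(p - 1) ‖x‖^(2-p)`, since the
subtracted term is nonnegative.
-/

open MeasureTheory

namespace MeasureTheory

variable {T : Type*} [MeasurableSpace T] {μ : Measure T}

theorem MemLp.toReal_eLpNorm_rpow_eq {f : T → ℝ} {p : ℝ} (hp : 0 < p)
    (hf : MemLp f (ENNReal.ofReal p) μ) (a : ℝ) :
    (eLpNorm f (ENNReal.ofReal p) μ).toReal ^ a = (∫ t, |f t| ^ p ∂μ) ^ (a / p) := by
  have hI : 0 ≤ ∫ t, |f t| ^ p ∂μ := integral_nonneg fun t => by positivity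
  rw [hf.eLpNorm_eq_integral_rpow_norm (by simpa using hp) ENNReal.ofReal_ne_top,
    ENNReal.toReal_ofReal hp.le, ENNReal.toReal_ofReal (by positivity)]
  simp only [Real.norm_eq_abs]
  rw [← Real.rpow_mul hI, inv_mul_eq_div]

theorem integral_abs_rpow_mul_abs_rpow_le {f g : T → ℝ} {a b p : ℝ} (ha : 0 ≤ a) (hb : 0 < b)
    (hab : a + b = p) (hf : MemLp f (ENNReal.ofReal p) μ) (hg : MemLp g (ENNReal.ofReal p) μ) :
    ∫ t, |f t| ^ a * |g t| ^ b ∂μ ≤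
      (eLpNorm f (ENNReal.ofReal p) μ).toReal ^ a *
        (eLpNorm g (ENNReal.ofReal p) μ).toReal ^ b := by
  have hp : 0 < p := by linarith
  rw [hf.toReal_eLpNorm_rpow_eq hp, hg.toReal_eLpNorm_rpow_eq hp]
  rcases ha.eq_or_lt with rfl | ha
  · simp [← hab, div_self hb.ne']
  have hpow {h : T → ℝ} (hh : MemLp h (ENNReal.ofReal p) μ) {c : ℝ} (hc : 0 < c) :
      MemLp (fun t => |h t| ^ c) (ENNReal.ofReal (p / c)) μ := by
    simpa [ENNReal.toReal_ofReal hc.le, ENNReal.ofReal_div_of_pos hc] using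
      hh.norm_rpow_div (ENNReal.ofReal c)
  have hpow_pow (h : T → ℝ) {c : ℝ} (hc : 0 < c) :
      ∫ t, (|h t| ^ c) ^ (p / c) ∂μ = ∫ t, |h t| ^ p ∂μ := by
    congr 1 with t
    rw [← Real.rpow_mul (abs_nonneg _), mul_div_cancel₀ _ hc.ne']
  have hconj : (p / a).HolderConjugate (p / b) := by
    simpa using Real.holderConjugate_one_div (a := a / p) (b := b / p) (by positivity)
      (by positivity) (by rw [← add_div, hab, div_self hp.ne'])
  have := integral_mul_le_Lp_mul_Lq_of_nonneg hconj
    (.of_forall fun t => by positivity) (.of_forall fun t => by positivity)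
    (hpow hf ha) (hpow hg hb)
  simpa [hpow_pow f ha, hpow_pow g hb] using this

end MeasureTheory

theorem Real.rpow_mul_rpow_neg_le_one {a : ℝ} (ha : 0 ≤ a) (s : ℝ) : a ^ s * a ^ (-s) ≤ 1 := by
  rcases ha.eq_or_lt with rfl | ha
  · rcases eq_or_ne s 0 with rfl | hs
    · simp
    · simp [Real.zero_rpow hs]
  · rw [← Real.rpow_add ha, add_neg_cancel, Real.rpow_zero]

theorem stmt_15_general {T : Type*} [MeasurableSpace T] (μ : Measure T)
    (p : ℝ) (hp : 2 ≤ p) (x v : T → ℝ)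
    (hx : MemLp x (ENNReal.ofReal p) μ) (hv : MemLp v (ENNReal.ofReal p) μ) :
    (p - 1) * (eLpNorm x (ENNReal.ofReal p) μ).toReal ^ (2 - p) *
        ∫ t, |x t| ^ (p - 2) * (v t) ^ 2 ∂μ -
      (p - 2) * (eLpNorm x (ENNReal.ofReal p) μ).toReal ^ (2 - 2 * p) *
        (∫ t, |x t| ^ (p - 2) * x t * v t ∂μ) ^ 2 ≤
      (p - 1) * (eLpNorm v (ENNReal.ofReal p) μ).toReal ^ 2 := by
  set N := (eLpNorm x (ENNReal.ofReal p) μ).toReal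
  set M := (eLpNorm v (ENNReal.ofReal p) μ).toReal
  have hp2 : 0 ≤ p - 2 := by linarith
  have hp1 : 0 ≤ p - 1 := by linarith
  have holder : ∫ t, |x t| ^ (p - 2) * (v t) ^ 2 ∂μ ≤ N ^ (p - 2) * M ^ 2 := by
    simpa [Real.rpow_two, sq_abs] using
      integral_abs_rpow_mul_abs_rpow_le hp2 two_pos (sub_add_cancel p 2) hx hv
  have hcross : 0 ≤ (p - 2) * N ^ (2 - 2 * p) * (∫ t, |x t| ^ (p - 2) * x t * v t ∂μ) ^ 2 := by
    positivity
  have hmain : (p - 1) * N ^ (2 - p) * ∫ t, |x t| ^ (p - 2) * (v t) ^ 2 ∂μ ≤ (p - 1) * M ^ 2 :=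
    calc (p - 1) * N ^ (2 - p) * ∫ t, |x t| ^ (p - 2) * (v t) ^ 2 ∂μ
        ≤ (p - 1) * N ^ (2 - p) * (N ^ (p - 2) * M ^ 2) := by gcongr
      _ = (p - 1) * (N ^ (2 - p) * N ^ (-(2 - p))) * M ^ 2 := by rw [neg_sub]; ring
      _ ≤ (p - 1) * 1 * M ^ 2 := by
          gcongr
          exact Real.rpow_mul_rpow_neg_le_one ENNReal.toReal_nonneg _
      _ = (p - 1) * M ^ 2 := by ring
  linarith

theorem stmt_15 {T : Type*} [MeasurableSpace T] (μ : Measure T)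
    (p : ℝ) (hp : 2 ≤ p) (x v : T → ℝ)
    (hx : MemLp x (ENNReal.ofReal p) μ) (hv : MemLp v (ENNReal.ofReal p) μ)
    (hx0 : ¬ x =ᵐ[μ] 0) :
    (p - 1) * (eLpNorm x (ENNReal.ofReal p) μ).toReal ^ (2 - p) *
        ∫ t, |x t| ^ (p - 2) * (v t) ^ 2 ∂μ -
      (p - 2) * (eLpNorm x (ENNReal.ofReal p) μ).toReal ^ (2 - 2 * p) *
        (∫ t, |x t| ^ (p - 2) * x t * v t ∂μ) ^ 2 ≤
      (p - 1) * (eLpNorm v (ENNReal.ofReal p) μ).toReal ^ 2 :=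
  stmt_15_general μ p hp x v hx hv
end

section
/- Let X₁, ..., X_n be independent Bochner-integrable random vectors in a separable Banach space X, let f_n = X₁ + ... + X_n, let F_j be the σ-field generated by X₁, ..., X_j, and set ζ_j = E[‖f_n‖ | F_j] - E‖f_n‖. Then (ζ_j)_{j=0}^n is a martingale with ζ_0 = 0, ζ_n = ‖f_n‖ - E‖f_n‖, and its increments ξ_j = ζ_j - ζ_{j-1} satisfy |ξ_j| ≤ ‖X_j‖ + E‖X_j‖ almost surely and E[ξ_j² | F_{j-1}] ≤ E‖X_j‖² almost surely. -/
/-! Fix `j`, write `S = ‖∑ i, X i‖` and `g = ‖∑ i ≠ j, X i‖`, so that `|S - g| ≤ ‖X j‖` and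
`‖X j‖ ≤ S + g`. Since `g` is independent of `X j`, its conditional expectations given `ℱ j` and
`ℱ (j - 1)` agree, so the increment `ζ j - ζ (j - 1)` is the increment of the martingale
`E[S - g | ℱ ·]`. The pointwise bound on `S - g` then gives `|ζ j - ζ (j - 1)| ≤ ‖X j‖ + E‖X j‖`,
and the conditional variance inequality gives
`E[(ζ j - ζ (j - 1))² | ℱ (j - 1)] ≤ E[(S - g)² | ℱ (j - 1)] ≤ E[‖X j‖² | ℱ (j - 1)] = E‖X j‖²`.
If `‖X j‖` is not square integrable, the right-hand side is `0` by convention; but then neither is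
the increment, whose conditional expectation is therefore `0` too: `‖X j‖` is bounded by the
increment plus an `ℱ (j - 1)`-measurable function, which is independent of `X j`. -/

open MeasureTheory ProbabilityTheory

section
variable {Ω : Type*} {m0 : MeasurableSpace Ω} {μ : Measure Ω} {m₁ m₂ 𝒜 𝒢 M : MeasurableSpace Ω}

theorem abs_condExp_ae_le_condExp_of_abs_le {η Y : Ω → ℝ}
    (hηi : Integrable η μ) (hYi : Integrable Y μ) (hηY : ∀ ω, |η ω| ≤ Y ω) :
    ∀ᵐ ω ∂μ, |μ[η|m₁] ω| ≤ μ[Y|m₁] ω := by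
  filter_upwards [abs_condExp_ae_le_condExp_abs (m := m₁) (μ := μ) η,
    condExp_mono (m := m₁) hηi.abs hYi (.of_forall hηY)] with ω h₁ h₂
  exact h₁.trans h₂

variable [IsFiniteMeasure μ]

theorem condExp_sq_condExp_sub_condExp_le (h₁₂ : m₁ ≤ m₂) (h₂ : m₂ ≤ m0) {η : Ω → ℝ}
    (hη : MemLp η 2 μ) :
    μ[(μ[η|m₂] - μ[η|m₁]) ^ 2 | m₁] ≤ᵐ[μ] μ[η ^ 2 | m₁] := by
  set A := μ[η|m₂]
  have hA : MemLp A 2 μ := hη.condExp one_le_two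
  have hvar : μ[(A - μ[η|m₁]) ^ 2 | m₁] =ᵐ[μ] Var[A; μ | m₁] := by
    refine condExp_congr_ae ?_
    filter_upwards [condExp_condExp_of_le (μ := μ) (f := η) h₁₂ h₂] with ω h
    simp [A, h]
  have hjensen : A ^ 2 ≤ᵐ[μ] μ[η ^ 2 | m₂] := by
    filter_upwards [condVar_ae_eq_condExp_sq_sub_sq_condExp h₂ hη,
      condExp_nonneg (m := m₂) (μ := μ) (f := (η - A) ^ 2)
        (.of_forall fun ω => sq_nonneg _)] with ω h h0
    have hvar₂ : 0 ≤ Var[η; μ | m₂] ω := h0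
    simp only [h, Pi.sub_apply, Pi.pow_apply] at hvar₂
    exact sub_nonneg.1 hvar₂
  calc μ[(A - μ[η|m₁]) ^ 2 | m₁]
      =ᵐ[μ] Var[A; μ | m₁] := hvar
    _ ≤ᵐ[μ] μ[A ^ 2 | m₁] := condVar_ae_le_condExp_sq (h₁₂.trans h₂) hA
    _ ≤ᵐ[μ] μ[μ[η ^ 2 | m₂] | m₁] :=
      condExp_mono hA.integrable_sq integrable_condExp hjensen
    _ =ᵐ[μ] μ[η ^ 2 | m₁] := condExp_condExp_of_le h₁₂ h₂

theorem setIntegral_inter_eq_mul_of_indep (hM : M ≤ m0) (h𝒢 : 𝒢 ≤ m0) (hind : Indep M 𝒢 μ)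
    {h : Ω → ℝ} (hh : StronglyMeasurable[M] h) (hhi : Integrable h μ) {s t : Set Ω}
    (hs : MeasurableSet[M] s) (ht : MeasurableSet[𝒢] t) :
    ∫ ω in s ∩ t, h ω ∂μ = (∫ ω in s, h ω ∂μ) * μ.real t := by
  have hindep : IndepFun (s.indicator h) (t.indicator (1 : Ω → ℝ)) μ :=
    indep_of_indep_of_le_left (indep_of_indep_of_le_right hind
      (stronglyMeasurable_const.indicator ht).measurable.comap_le)
      (hh.indicator hs).measurable.comap_le
  have hprod : s.indicator h * t.indicator 1 = (s ∩ t).indicator h := by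
    ext ω
    by_cases hωs : ω ∈ s <;> by_cases hωt : ω ∈ t <;> simp [hωs, hωt]
  rw [← integral_indicator (hM _ hs |>.inter (h𝒢 _ ht)), ← hprod,
    hindep.integral_mul_eq_mul_integral ((hhi.indicator (hM _ hs)).aestronglyMeasurable)
      ((integrable_const _).indicator (h𝒢 _ ht)).aestronglyMeasurable,
    integral_indicator (hM _ hs), integral_indicator_one (h𝒢 _ ht)]

theorem condExp_sup_eq_of_indep (h𝒜M : 𝒜 ≤ M) (hM : M ≤ m0) (h𝒢 : 𝒢 ≤ m0)
    (hind : Indep M 𝒢 μ) {g : Ω → ℝ} (hg : StronglyMeasurable[M] g) (hgi : Integrable g μ) :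
    μ[g|𝒜 ⊔ 𝒢] =ᵐ[μ] μ[g|𝒜] := by
  have h𝒜 : 𝒜 ≤ m0 := h𝒜M.trans hM
  have hsup : 𝒜 ⊔ 𝒢 ≤ m0 := sup_le h𝒜 h𝒢
  let π : Set (Set Ω) := Set.image2 (· ∩ ·) {s | MeasurableSet[𝒜] s} {t | MeasurableSet[𝒢] t}
  have hgen : 𝒜 ⊔ 𝒢 = MeasurableSpace.generateFrom π := by
    refine le_antisymm (sup_le (fun s hs => ?_) fun t ht => ?_) (MeasurableSpace.generateFrom_le ?_)
    · exact MeasurableSpace.measurableSet_generateFrom ⟨s, hs, Set.univ, .univ, Set.inter_univ s⟩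
    · exact MeasurableSpace.measurableSet_generateFrom ⟨Set.univ, .univ, t, ht, Set.univ_inter t⟩
    · rintro _ ⟨s, hs, t, ht, rfl⟩
      exact (le_sup_left (b := 𝒢) _ hs).inter (le_sup_right (a := 𝒜) _ ht)
  have hπ : IsPiSystem π := by
    rintro _ ⟨s, hs, t, ht, rfl⟩ _ ⟨s', hs', t', ht', rfl⟩ -
    exact ⟨s ∩ s', hs.inter hs', t ∩ t', ht.inter ht', Set.inter_inter_inter_comm s s' t t'⟩
  have hcond : StronglyMeasurable[M] (μ[g|𝒜]) := stronglyMeasurable_condExp.mono h𝒜M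
  suffices h : ∀ u, MeasurableSet[𝒜 ⊔ 𝒢] u → ∫ ω in u, μ[g|𝒜] ω ∂μ = ∫ ω in u, g ω ∂μ from
    (ae_eq_condExp_of_forall_setIntegral_eq hsup hgi (fun _ _ _ => integrable_condExp.integrableOn)
      (fun u hu _ => h u hu)
      (stronglyMeasurable_condExp.mono (le_sup_left : 𝒜 ≤ 𝒜 ⊔ 𝒢)).aestronglyMeasurable).symm
  intro u hu
  induction u, hu using MeasurableSpace.induction_on_inter hgen hπ with
  | empty => simp
  | basic _ hu =>
    obtain ⟨s, hs, t, ht, rfl⟩ := hu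
    rw [setIntegral_inter_eq_mul_of_indep hM h𝒢 hind hcond integrable_condExp (h𝒜M _ hs) ht,
      setIntegral_inter_eq_mul_of_indep hM h𝒢 hind hg hgi (h𝒜M _ hs) ht,
      setIntegral_condExp h𝒜 hgi hs]
  | compl t ht heq =>
    rw [setIntegral_compl (hsup _ ht) integrable_condExp, setIntegral_compl (hsup _ ht) hgi, heq,
      integral_condExp h𝒜]
  | iUnion f hdisj hf heq =>
    rw [integral_iUnion (fun i => hsup _ (hf i)) hdisj integrable_condExp.integrableOn,
      integral_iUnion (fun i => hsup _ (hf i)) hdisj hgi.integrableOn]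
    exact tsum_congr heq

theorem integrable_of_le_add_of_indep [NeZero μ] (h𝒜 : 𝒜 ≤ m0) (h𝒢 : 𝒢 ≤ m0)
    (hind : Indep 𝒜 𝒢 μ) {Y Z D : Ω → ℝ} (hY : StronglyMeasurable[𝒢] Y) (hY0 : 0 ≤ Y)
    (hZ : Integrable Z μ) (hD : StronglyMeasurable[𝒜] D) (hle : Y ≤ᵐ[μ] Z + D) :
    Integrable Y μ := by
  obtain ⟨K, hK⟩ : ∃ K : ℕ, μ {ω | D ω ≤ K} ≠ 0 := by
    by_contra! h
    refine NeZero.ne μ (Measure.measure_univ_eq_zero.1 (measure_mono_null (fun ω _ => ?_)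
      (measure_iUnion_null h)))
    exact Set.mem_iUnion.2 (exists_nat_ge (D ω))
  set T := {ω | D ω ≤ K}
  have hT : MeasurableSet[𝒜] T := hD.measurable measurableSet_Iic
  have hYT : Integrable (T.indicator Y) μ := by
    refine (hZ.abs.add (integrable_const (K : ℝ))).mono'
      ((hY.mono h𝒢).aestronglyMeasurable.indicator (h𝒜 _ hT)) ?_
    filter_upwards [hle] with ω hω
    by_cases hωT : ω ∈ T
    · have : D ω ≤ K := hωT
      simp only [Set.indicator_of_mem hωT, Real.norm_eq_abs, abs_of_nonneg (hY0 ω), Pi.add_apply]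
        at hω ⊢
      linarith [le_abs_self (Z ω)]
    · rw [Set.indicator_of_notMem hωT, norm_zero]
      exact add_nonneg (abs_nonneg _) K.cast_nonneg
  have hindep : IndepFun (T.indicator (1 : Ω → ℝ)) Y μ :=
    indep_of_indep_of_le_left (indep_of_indep_of_le_right hind hY.measurable.comap_le)
      (stronglyMeasurable_const.indicator hT).measurable.comap_le
  refine hindep.integrable_right_of_integrable_op (· * ·) 1 one_ne_zero (fun x y => by
    simp [enorm_mul]) ?_ ((stronglyMeasurable_const.indicator (h𝒜 _ hT)).aestronglyMeasurable)
    (hY.mono h𝒢).aestronglyMeasurable ?_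
  · simpa [← Set.indicator_mul_left] using hYT
  · rw [Set.indicator_ae_eq_zero]
    simpa using hK

theorem condExp_sup_sub_condExp_ae_eq (h𝒜M : 𝒜 ≤ M) (hM : M ≤ m0) (h𝒢 : 𝒢 ≤ m0)
    (hind : Indep M 𝒢 μ) {S g : Ω → ℝ} (hSi : Integrable S μ) (hg : StronglyMeasurable[M] g)
    (hgi : Integrable g μ) :
    μ[S|𝒜 ⊔ 𝒢] - μ[S|𝒜] =ᵐ[μ] μ[S - g|𝒜 ⊔ 𝒢] - μ[S - g|𝒜] := by
  filter_upwards [condExp_sub hSi hgi (𝒜 ⊔ 𝒢), condExp_sub hSi hgi 𝒜,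
    condExp_sup_eq_of_indep h𝒜M hM h𝒢 hind hg hgi] with ω h₁ h₂ h₃
  simp only [Pi.sub_apply, h₁, h₂, h₃]
  ring

theorem abs_condExp_sup_sub_condExp_le (h𝒜M : 𝒜 ≤ M) (hM : M ≤ m0) (h𝒢 : 𝒢 ≤ m0)
    (hind : Indep M 𝒢 μ) {S g Y : Ω → ℝ} (hSi : Integrable S μ) (hg : StronglyMeasurable[M] g)
    (hgi : Integrable g μ) (hY : StronglyMeasurable[𝒢] Y) (hYi : Integrable Y μ)
    (hSgY : ∀ ω, |S ω - g ω| ≤ Y ω) :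
    ∀ᵐ ω ∂μ, |μ[S|𝒜 ⊔ 𝒢] ω - μ[S|𝒜] ω| ≤ Y ω + ∫ ω', Y ω' ∂μ := by
  have hη := hSi.sub hgi
  have hY_sup : μ[Y|𝒜 ⊔ 𝒢] = Y :=
    condExp_of_stronglyMeasurable (sup_le (h𝒜M.trans hM) h𝒢) (hY.mono le_sup_right) hYi
  have hY_past : μ[Y|𝒜] =ᵐ[μ] fun _ => ∫ ω', Y ω' ∂μ :=
    condExp_indep_eq h𝒢 (h𝒜M.trans hM) hY (indep_of_indep_of_le_right hind.symm h𝒜M)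
  filter_upwards [condExp_sup_sub_condExp_ae_eq h𝒜M hM h𝒢 hind hSi hg hgi,
    abs_condExp_ae_le_condExp_of_abs_le (m₁ := 𝒜 ⊔ 𝒢) hη hYi hSgY,
    abs_condExp_ae_le_condExp_of_abs_le (m₁ := 𝒜) hη hYi hSgY, hY_past] with ω h h₁ h₂ h₃
  rw [← Pi.sub_apply, h, Pi.sub_apply]
  rw [hY_sup] at h₁
  rw [h₃] at h₂
  exact (abs_sub _ _).trans (add_le_add h₁ h₂)

theorem integrable_sq_of_integrable_sq_condExp_sup_sub_condExp [NeZero μ] (h𝒜M : 𝒜 ≤ M)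
    (hM : M ≤ m0) (h𝒢 : 𝒢 ≤ m0) (hind : Indep M 𝒢 μ) {S g Y : Ω → ℝ} (hSi : Integrable S μ)
    (hg : StronglyMeasurable[M] g) (hgi : Integrable g μ) (hY : StronglyMeasurable[𝒢] Y)
    (hYi : Integrable Y μ) (hY0 : 0 ≤ Y) (hYSg : ∀ ω, Y ω ≤ S ω + g ω)
    (hξ : Integrable ((μ[S|𝒜 ⊔ 𝒢] - μ[S|𝒜]) ^ 2) μ) :
    Integrable (fun ω => Y ω ^ 2) μ := by
  have h𝒜 : 𝒜 ≤ m0 := h𝒜M.trans hM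
  set D := μ[S|𝒜] + μ[g|𝒜]
  have hYD : Y ≤ᵐ[μ] (μ[S|𝒜 ⊔ 𝒢] - μ[S|𝒜]) + D := by
    have hY_sup : μ[Y|𝒜 ⊔ 𝒢] = Y :=
      condExp_of_stronglyMeasurable (sup_le h𝒜 h𝒢) (hY.mono le_sup_right) hYi
    filter_upwards [condExp_mono (m := 𝒜 ⊔ 𝒢) hYi (hSi.add hgi) (.of_forall hYSg),
      condExp_add hSi hgi (𝒜 ⊔ 𝒢), condExp_sup_eq_of_indep h𝒜M hM h𝒢 hind hg hgi] with ω h₁ h₂ h₃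
    simp only [hY_sup, h₂, h₃, Pi.add_apply] at h₁
    simp only [D, Pi.add_apply, Pi.sub_apply]
    linarith
  have hD : StronglyMeasurable[𝒜] D := stronglyMeasurable_condExp.add stronglyMeasurable_condExp
  refine integrable_of_le_add_of_indep h𝒜 h𝒢 (indep_of_indep_of_le_left hind h𝒜M)
    (hY.pow 2) (fun ω => sq_nonneg (Y ω)) (hξ.const_mul 2) ((hD.pow 2).const_mul 2) ?_
  filter_upwards [hYD] with ω h
  simp only [Pi.add_apply, Pi.sub_apply, Pi.pow_apply] at h ⊢
  nlinarith [mul_le_mul h h (hY0 ω) ((hY0 ω).trans h),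
    sq_nonneg (μ[S|𝒜 ⊔ 𝒢] ω - μ[S|𝒜] ω - D ω)]

theorem condExp_sq_condExp_sup_sub_condExp_le [NeZero μ] (h𝒜M : 𝒜 ≤ M) (hM : M ≤ m0)
    (h𝒢 : 𝒢 ≤ m0) (hind : Indep M 𝒢 μ) {S g Y : Ω → ℝ} (hSi : Integrable S μ)
    (hg : StronglyMeasurable[M] g) (hgi : Integrable g μ) (hY : StronglyMeasurable[𝒢] Y)
    (hYi : Integrable Y μ) (hSgY : ∀ ω, |S ω - g ω| ≤ Y ω) (hYSg : ∀ ω, Y ω ≤ S ω + g ω) :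
    μ[(μ[S|𝒜 ⊔ 𝒢] - μ[S|𝒜]) ^ 2 | 𝒜] ≤ᵐ[μ] fun _ => ∫ ω, Y ω ^ 2 ∂μ := by
  have h𝒜 : 𝒜 ≤ m0 := h𝒜M.trans hM
  by_cases hY2 : Integrable (fun ω => Y ω ^ 2) μ
  · have hη : MemLp (S - g) 2 μ :=
      ((memLp_two_iff_integrable_sq (hY.mono h𝒢).aestronglyMeasurable).2 hY2).mono
        (hSi.sub hgi).aestronglyMeasurable (.of_forall fun ω => by
          simpa [abs_of_nonneg ((abs_nonneg _).trans (hSgY ω))] using hSgY ω)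
    calc μ[(μ[S|𝒜 ⊔ 𝒢] - μ[S|𝒜]) ^ 2 | 𝒜]
        =ᵐ[μ] μ[(μ[S - g|𝒜 ⊔ 𝒢] - μ[S - g|𝒜]) ^ 2 | 𝒜] := by
          refine condExp_congr_ae ?_
          filter_upwards [condExp_sup_sub_condExp_ae_eq h𝒜M hM h𝒢 hind hSi hg hgi] with ω h
          simp only [Pi.pow_apply, h]
      _ ≤ᵐ[μ] μ[(S - g) ^ 2 | 𝒜] :=
          condExp_sq_condExp_sub_condExp_le le_sup_left (sup_le h𝒜 h𝒢) hη
      _ ≤ᵐ[μ] μ[fun ω => Y ω ^ 2 | 𝒜] :=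
          condExp_mono hη.integrable_sq hY2 (.of_forall fun ω => sq_le_sq' (abs_le.1 (hSgY ω)).1
            (abs_le.1 (hSgY ω)).2)
      _ =ᵐ[μ] fun _ => ∫ ω, Y ω ^ 2 ∂μ :=
          condExp_indep_eq h𝒢 h𝒜 (hY.pow 2) (indep_of_indep_of_le_right hind.symm h𝒜M)
  · have hξ : ¬Integrable ((μ[S|𝒜 ⊔ 𝒢] - μ[S|𝒜]) ^ 2) μ := fun hξ =>
      hY2 (integrable_sq_of_integrable_sq_condExp_sup_sub_condExp h𝒜M hM h𝒢 hind hSi hg hgi hY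
        hYi (fun ω => (abs_nonneg _).trans (hSgY ω)) hYSg hξ)
    rw [condExp_of_not_integrable hξ, integral_undef hY2]
    rfl

end

theorem MeasurableSpace.comap_pi_eq_iSup {Ω ι β : Type*} [MeasurableSpace β] (f : ι → Ω → β) :
    MeasurableSpace.comap (fun ω i => f i ω) MeasurableSpace.pi =
      ⨆ i, MeasurableSpace.comap (f i) inferInstance := by
  simp only [MeasurableSpace.pi, MeasurableSpace.comap_iSup, MeasurableSpace.comap_comp]
  rfl

theorem iSup_fin_add_one_eq_biSup_Icc {α : Type*} [CompleteLattice α] (a : ℕ → α) (j : ℕ) :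
    ⨆ i : Fin j, a (i + 1) = ⨆ i ∈ Set.Icc 1 j, a i := by
  have : Set.range (fun i : Fin j => (i : ℕ) + 1) = Set.Icc 1 j := by
    ext k
    simp only [Set.mem_range, Set.mem_Icc]
    refine ⟨fun ⟨i, hi⟩ => by omega, fun hk => ⟨⟨k - 1, by omega⟩, by simp; omega⟩⟩
  rw [← this, iSup_range]

theorem biSup_Icc_one_eq_sup {α : Type*} [CompleteLattice α] (a : ℕ → α) {j : ℕ} (hj : 1 ≤ j) :
    ⨆ i ∈ Set.Icc 1 j, a i = (⨆ i ∈ Set.Icc 1 (j - 1), a i) ⊔ a j := by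
  have : Set.Icc 1 j = insert j (Set.Icc 1 (j - 1)) := by
    ext i
    simp only [Set.mem_Icc, Set.mem_insert_iff]
    omega
  rw [this, iSup_insert, sup_comm]

theorem biSup_Icc_one_pred_le_biSup_compl {α : Type*} [CompleteLattice α] (a : ℕ → α) (j : ℕ) :
    ⨆ i ∈ Set.Icc 1 (j - 1), a i ≤ ⨆ i ∈ ({j}ᶜ : Set ℕ), a i :=
  biSup_mono fun i hi => by simp only [Set.mem_Icc] at hi; grind

theorem abs_norm_sum_sub_norm_sum_erase_le {ι E : Type*} [NormedAddCommGroup E] [DecidableEq ι]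
    {s : Finset ι} {j : ι} (hj : j ∈ s) (x : ι → E) :
    |‖∑ i ∈ s, x i‖ - ‖∑ i ∈ s.erase j, x i‖| ≤ ‖x j‖ := by
  simpa [← Finset.add_sum_erase s x hj] using
    abs_norm_sub_norm_le (x j + ∑ i ∈ s.erase j, x i) (∑ i ∈ s.erase j, x i)

theorem norm_le_norm_sum_add_norm_sum_erase {ι E : Type*} [NormedAddCommGroup E] [DecidableEq ι]
    {s : Finset ι} {j : ι} (hj : j ∈ s) (x : ι → E) :
    ‖x j‖ ≤ ‖∑ i ∈ s, x i‖ + ‖∑ i ∈ s.erase j, x i‖ := by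
  simpa [← Finset.add_sum_erase s x hj] using
    norm_sub_le (x j + ∑ i ∈ s.erase j, x i) (∑ i ∈ s.erase j, x i)

section NormOfSum
variable {Ω ι E : Type*} {m0 : MeasurableSpace Ω} {μ : Measure Ω}
  [NormedAddCommGroup E] [MeasurableSpace E] [BorelSpace E] [SecondCountableTopology E]

theorem indep_biSup_compl_singleton {m : ι → MeasurableSpace Ω} (hm : ∀ i, m i ≤ m0)
    (hind : iIndep m μ) (j : ι) : Indep (⨆ i ∈ ({j}ᶜ : Set ι), m i) (m j) μ := by
  simpa using indep_iSup_of_disjoint hm hind (disjoint_compl_left (a := ({j} : Set ι)))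

theorem stronglyMeasurable_norm_sum {X : ι → Ω → E} {m : MeasurableSpace Ω} {s : Finset ι}
    (hX : ∀ i ∈ s, MeasurableSpace.comap (X i) inferInstance ≤ m) :
    StronglyMeasurable[m] fun ω => ‖∑ i ∈ s, X i ω‖ :=
  (Finset.measurable_sum s fun i hi => Measurable.of_comap_le (hX i hi)).norm.stronglyMeasurable

variable [IsProbabilityMeasure μ] {X : ι → Ω → E} {s : Finset ι} {j : ι}

theorem abs_condExp_norm_sum_sup_sub_condExp_le (hmeas : ∀ i, Measurable (X i))
    (hint : ∀ i, Integrable (X i) μ) (hindep : iIndepFun X μ) (hj : j ∈ s)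
    {𝒜 : MeasurableSpace Ω}
    (h𝒜 : 𝒜 ≤ ⨆ i ∈ ({j}ᶜ : Set ι), MeasurableSpace.comap (X i) inferInstance) :
    ∀ᵐ ω ∂μ, |μ[fun ω => ‖∑ i ∈ s, X i ω‖|𝒜 ⊔ MeasurableSpace.comap (X j) inferInstance] ω -
      μ[fun ω => ‖∑ i ∈ s, X i ω‖|𝒜] ω| ≤ ‖X j ω‖ + ∫ ω', ‖X j ω'‖ ∂μ := by
  classical
  have hind : iIndep (fun i => MeasurableSpace.comap (X i) inferInstance) μ := hindep
  exact abs_condExp_sup_sub_condExp_le h𝒜 (iSup₂_le fun i _ => (hmeas i).comap_le)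
    (hmeas j).comap_le (indep_biSup_compl_singleton (fun i => (hmeas i).comap_le) hind j)
    (integrable_finsetSum s fun i _ => hint i).norm
    (stronglyMeasurable_norm_sum fun i hi =>
      le_biSup (fun i => MeasurableSpace.comap (X i) inferInstance) (Finset.ne_of_mem_erase hi))
    (integrable_finsetSum _ fun i _ => hint i).norm
    (comap_measurable (X j)).stronglyMeasurable.norm (hint j).norm
    fun ω => abs_norm_sum_sub_norm_sum_erase_le hj (X · ω)

theorem condExp_sq_condExp_norm_sum_sup_sub_condExp_le (hmeas : ∀ i, Measurable (X i))
    (hint : ∀ i, Integrable (X i) μ) (hindep : iIndepFun X μ) (hj : j ∈ s)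
    {𝒜 : MeasurableSpace Ω}
    (h𝒜 : 𝒜 ≤ ⨆ i ∈ ({j}ᶜ : Set ι), MeasurableSpace.comap (X i) inferInstance) :
    μ[(μ[fun ω => ‖∑ i ∈ s, X i ω‖|𝒜 ⊔ MeasurableSpace.comap (X j) inferInstance] -
      μ[fun ω => ‖∑ i ∈ s, X i ω‖|𝒜]) ^ 2 | 𝒜] ≤ᵐ[μ] fun _ => ∫ ω, ‖X j ω‖ ^ 2 ∂μ := by
  classical
  have hind : iIndep (fun i => MeasurableSpace.comap (X i) inferInstance) μ := hindep
  exact condExp_sq_condExp_sup_sub_condExp_le h𝒜 (iSup₂_le fun i _ => (hmeas i).comap_le)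
    (hmeas j).comap_le (indep_biSup_compl_singleton (fun i => (hmeas i).comap_le) hind j)
    (integrable_finsetSum s fun i _ => hint i).norm
    (stronglyMeasurable_norm_sum fun i hi =>
      le_biSup (fun i => MeasurableSpace.comap (X i) inferInstance) (Finset.ne_of_mem_erase hi))
    (integrable_finsetSum _ fun i _ => hint i).norm
    (comap_measurable (X j)).stronglyMeasurable.norm (hint j).norm
    (fun ω => abs_norm_sum_sub_norm_sum_erase_le hj (X · ω))
    fun ω => norm_le_norm_sum_add_norm_sum_erase hj (X · ω)

end NormOfSum

theorem stmt_17_general {Ω : Type*} {m0 : MeasurableSpace Ω} {μ : Measure Ω} [IsProbabilityMeasure μ]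
    {E : Type*} [NormedAddCommGroup E]
    [MeasurableSpace E] [BorelSpace E] [SecondCountableTopology E]
    (n : ℕ) (X : ℕ → Ω → E)
    (hmeas : ∀ i, Measurable (X i))
    (hint : ∀ i, Integrable (X i) μ)
    (hindep : iIndepFun X μ)
    (ℱ : ℕ → MeasurableSpace Ω)
    (hℱ : ∀ j, ℱ j = MeasurableSpace.comap (fun ω (i : Fin j) => X (i + 1) ω)
      MeasurableSpace.pi)
    (S : Ω → ℝ) (hS : S = fun ω => ‖∑ i ∈ Finset.Icc 1 n, X i ω‖)
    (ζ : ℕ → Ω → ℝ)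
    (hζ : ζ = fun j ω => (μ[S | ℱ j]) ω - ∫ ω', S ω' ∂μ) :
    (ζ 0 =ᵐ[μ] 0) ∧
    (ζ n =ᵐ[μ] fun ω => S ω - ∫ ω', S ω' ∂μ) ∧
    (∀ j ∈ Finset.Icc 1 n, μ[ζ j | ℱ (j - 1)] =ᵐ[μ] ζ (j - 1)) ∧
    (∀ j ∈ Finset.Icc 1 n, ∀ᵐ ω ∂μ,
      |ζ j ω - ζ (j - 1) ω| ≤ ‖X j ω‖ + ∫ ω', ‖X j ω'‖ ∂μ) ∧
    (∀ j ∈ Finset.Icc 1 n, ∀ᵐ ω ∂μ,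
      (μ[fun ω' => (ζ j ω' - ζ (j - 1) ω') ^ 2 | ℱ (j - 1)]) ω ≤
        ∫ ω', ‖X j ω'‖ ^ 2 ∂μ) := by
  set 𝒢 : ℕ → MeasurableSpace Ω := fun i => MeasurableSpace.comap (X i) inferInstance
  have hℱ_eq : ∀ j, ℱ j = ⨆ i ∈ Set.Icc 1 j, 𝒢 i := fun j => by
    rw [hℱ, MeasurableSpace.comap_pi_eq_iSup, ← iSup_fin_add_one_eq_biSup_Icc]
  have hℱ_le : ∀ j, ℱ j ≤ m0 := fun j => hℱ_eq j ▸ iSup₂_le fun i _ => (hmeas i).comap_le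
  let 𝔽 : Filtration ℕ m0 := ⟨ℱ, fun a b hab => by
    simp only [hℱ_eq]; exact biSup_mono (Set.Icc_subset_Icc_right hab), hℱ_le⟩
  have hℱ_past : ∀ j, ℱ (j - 1) ≤ ⨆ i ∈ ({j}ᶜ : Set ℕ), 𝒢 i := fun j =>
    hℱ_eq (j - 1) ▸ biSup_Icc_one_pred_le_biSup_compl 𝒢 j
  have hξ : ∀ j ∈ Finset.Icc 1 n, (fun ω => ζ j ω - ζ (j - 1) ω) =
      μ[S|ℱ (j - 1) ⊔ 𝒢 j] - μ[S|ℱ (j - 1)] := fun j hj => by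
    ext ω
    simp only [hζ, hℱ_eq, ← biSup_Icc_one_eq_sup 𝒢 (Finset.mem_Icc.1 hj).1, Pi.sub_apply]
    ring
  refine ⟨?_, ?_, fun j _ => ?_, fun j hj => ?_, fun j hj => ?_⟩
  · have hℱ₀ : ℱ 0 = ⊥ := by simp [hℱ_eq]
    refine .of_forall fun ω => ?_
    simp [hζ, hℱ₀, condExp_bot]
  · have hSℱ : StronglyMeasurable[ℱ n] S := hS ▸ stronglyMeasurable_norm_sum fun i hi =>
      hℱ_eq n ▸ le_biSup 𝒢 (by simpa using hi)
    rw [hζ]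
    simp only [condExp_of_stronglyMeasurable (hℱ_le n) hSℱ
      (hS ▸ (integrable_finsetSum _ fun i _ => hint i).norm)]
    rfl
  · rw [hζ]
    exact ((martingale_condExp S 𝔽 μ).sub (martingale_const 𝔽 μ _)).condExp_ae_eq
      (Nat.sub_le j 1)
  · have hbound := hS ▸ abs_condExp_norm_sum_sup_sub_condExp_le hmeas hint hindep hj (hℱ_past j)
    filter_upwards [hbound] with ω hω
    have h := congrFun (hξ j hj) ω
    simp only [Pi.sub_apply] at h
    rwa [h]
  · have hvar := hS ▸ condExp_sq_condExp_norm_sum_sup_sub_condExp_le hmeas hint hindep hj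
      (hℱ_past j)
    rwa [← hξ j hj] at hvar

theorem stmt_17 {Ω : Type*} {m0 : MeasurableSpace Ω} {μ : Measure Ω} [IsProbabilityMeasure μ]
    {E : Type*} [NormedAddCommGroup E] [NormedSpace ℝ E] [CompleteSpace E]
    [MeasurableSpace E] [BorelSpace E] [SecondCountableTopology E]
    (n : ℕ) (X : ℕ → Ω → E)
    (hmeas : ∀ i, Measurable (X i))
    (hint : ∀ i, Integrable (X i) μ)
    (hindep : iIndepFun X μ)
    (ℱ : ℕ → MeasurableSpace Ω)
    (hℱ : ∀ j, ℱ j = MeasurableSpace.comap (fun ω (i : Fin j) => X (i + 1) ω)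
      MeasurableSpace.pi)
    (S : Ω → ℝ) (hS : S = fun ω => ‖∑ i ∈ Finset.Icc 1 n, X i ω‖)
    (ζ : ℕ → Ω → ℝ)
    (hζ : ζ = fun j ω => (μ[S | ℱ j]) ω - ∫ ω', S ω' ∂μ) :
    (ζ 0 =ᵐ[μ] 0) ∧
    (ζ n =ᵐ[μ] fun ω => S ω - ∫ ω', S ω' ∂μ) ∧
    (∀ j ∈ Finset.Icc 1 n, μ[ζ j | ℱ (j - 1)] =ᵐ[μ] ζ (j - 1)) ∧
    (∀ j ∈ Finset.Icc 1 n, ∀ᵐ ω ∂μ,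
      |ζ j ω - ζ (j - 1) ω| ≤ ‖X j ω‖ + ∫ ω', ‖X j ω'‖ ∂μ) ∧
    (∀ j ∈ Finset.Icc 1 n, ∀ᵐ ω ∂μ,
      (μ[fun ω' => (ζ j ω' - ζ (j - 1) ω') ^ 2 | ℱ (j - 1)]) ω ≤
        ∫ ω', ‖X j ω'‖ ^ 2 ∂μ) :=
  stmt_17_general (m0 := m0) n X hmeas hint hindep ℱ hℱ S hS ζ hζ
end

section
/- For p ≥ 2, the function q_p : [0,1] → ℝ defined by q_p(α) = √(pα+1) · exp(½ · (pα - 2p)/(pα + 1)) is continuous, strictly increasing, and maps [0,1] onto the interval [e^{-p}, √(p+1) · exp(-p/(2(p+1)))]. -/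
/-!
Both factors of `q_p` are strictly increasing for `p > 0`: the square root obviously, and the
exponent because `(p α - 2 p) / (p α + 1) = 1 - (1 + 2 p) / (p α + 1)`. Both are
nonnegative, so their product is strictly increasing, and being continuous it maps `[0, 1]` onto
`[q_p 0, q_p 1]`.
-/

open Real Set

lemma StrictMonoOn.mul_of_nonneg {α M₀ : Type*} [Preorder α] [MulZeroClass M₀] [PartialOrder M₀]
    [PosMulStrictMono M₀] [MulPosStrictMono M₀] {f g : α → M₀} {s : Set α}
    (hf : StrictMonoOn f s) (hg : StrictMonoOn g s)
    (hf₀ : ∀ x ∈ s, 0 ≤ f x) (hg₀ : ∀ x ∈ s, 0 ≤ g x) :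
    StrictMonoOn (f * g) s :=
  fun x hx _ hy h ↦ mul_lt_mul'' (hf hx hy h) (hg hx hy h) (hf₀ x hx) (hg₀ x hx)

lemma strictMonoOn_sqrt_mul_add_one {p : ℝ} (hp : 0 < p) :
    StrictMonoOn (fun x ↦ √(p * x + 1)) (Ici 0) := fun x hx _ _ hxy ↦
  sqrt_lt_sqrt (by nlinarith [mem_Ici.1 hx]) (by nlinarith)

lemma strictMonoOn_sub_div_mul_add_one {p c : ℝ} (hp : 0 < p) (hc : -1 < c) :
    StrictMonoOn (fun x ↦ (p * x - c) / (p * x + 1)) (Ici 0) := by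
  intro x hx y hy hxy
  have hx' : 0 < p * x + 1 := by nlinarith [mem_Ici.1 hx]
  have hy' : 0 < p * y + 1 := by nlinarith [mem_Ici.1 hy]
  rw [div_lt_div_iff₀ hx' hy']
  nlinarith [mul_pos (mul_pos hp (sub_pos.2 hxy)) (neg_lt_iff_pos_add'.1 hc)]

/-- The function `q_p` of Pinelis, Lemma 6.6. -/
noncomputable def pinelisQ (p α : ℝ) : ℝ :=
  √(p * α + 1) * exp (1 / 2 * ((p * α - 2 * p) / (p * α + 1)))

lemma continuousOn_pinelisQ {p : ℝ} (hp : 0 ≤ p) : ContinuousOn (pinelisQ p) (Ici 0) := by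
  have hden : ∀ x ∈ Ici (0 : ℝ), p * x + 1 ≠ 0 := fun x hx ↦ by nlinarith [mem_Ici.1 hx]
  unfold pinelisQ
  fun_prop (disch := assumption)

lemma strictMonoOn_pinelisQ {p : ℝ} (hp : 0 < p) : StrictMonoOn (pinelisQ p) (Ici 0) := by
  refine (strictMonoOn_sqrt_mul_add_one hp).mul_of_nonneg ?_ (fun _ _ ↦ sqrt_nonneg _)
    (fun _ _ ↦ (exp_pos _).le)
  exact (exp_strictMono.comp (strictMono_mul_left_of_pos one_half_pos)).comp_strictMonoOn
    (strictMonoOn_sub_div_mul_add_one hp (by linarith))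

lemma pinelisQ_zero (p : ℝ) : pinelisQ p 0 = exp (-p) := by
  simp [pinelisQ]

lemma pinelisQ_one {p : ℝ} (hp : 0 ≤ p) :
    pinelisQ p 1 = √(p + 1) * exp (-p / (2 * (p + 1))) := by
  have : p + 1 ≠ 0 := by linarith
  simp only [pinelisQ, mul_one]
  congr 2
  field_simp
  ring

theorem stmt_19 (p : ℝ) (hp : 2 ≤ p)
    (qp : ℝ → ℝ)
    (hqp : qp = fun α => Real.sqrt (p * α + 1) *
      Real.exp (1 / 2 * ((p * α - 2 * p) / (p * α + 1)))) :
    ContinuousOn qp (Set.Icc 0 1) ∧ StrictMonoOn qp (Set.Icc 0 1) ∧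
      qp '' Set.Icc 0 1 =
        Set.Icc (Real.exp (-p)) (Real.sqrt (p + 1) * Real.exp (-p / (2 * (p + 1)))) := by
  have hp₀ : 0 < p := by linarith
  obtain rfl : qp = pinelisQ p := hqp
  have hcont : ContinuousOn (pinelisQ p) (Icc 0 1) :=
    (continuousOn_pinelisQ hp₀.le).mono Icc_subset_Ici_self
  have hmono : StrictMonoOn (pinelisQ p) (Icc 0 1) :=
    (strictMonoOn_pinelisQ hp₀).mono Icc_subset_Ici_self
  refine ⟨hcont, hmono, ?_⟩
  rw [hcont.image_Icc_of_monotoneOn zero_le_one hmono.monotoneOn, pinelisQ_zero,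
    pinelisQ_one hp₀.le]
end
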